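/- arXiv:2008.12951 — 5 statements merged into one kernel-verified Lean document; each statement's English description precedes it below -/
import Mathlib

section
/- Let μ be Lebesgue measure on ℝ², let r₀ > 0 and c ∈ (0,1]. Say that a compact set S ⊆ ℝ² satisfies the two-sided corkscrew condition with constants (r₀, c) if for every x in the topological boundary ∂S and every r ∈ (0, r₀] there exist points y, z ∈ ℝ² such that the closed ball of centre y and radius c·r is contained in S ∩ B(x,r) and the closed ball of centre z and radius c·r is contained in B(x,r) \ S, where B(x,r) is the closed ball of centre x and radius r. Let A, B ⊆ ℝ² be compact sets with nonempty boundaries, both satisfying the two-sided corkscrew condition with constants (r₀, c), and assume μ(A Δ B) < π c² r₀². Then the Hausdorff distance between the boundaries satisfies d_H(∂A, ∂B) ≤ (1/c)·√(μ(A Δ B)/π). -/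
open MeasureTheory Metric

/-- The two-sided corkscrew condition with constants `(r₀, c)`. -/
def TwoSidedCorkscrew (r₀ c : ℝ) (S : Set (EuclideanSpace ℝ (Fin 2))) : Prop :=
  ∀ x ∈ frontier S, ∀ r : ℝ, 0 < r → r ≤ r₀ →
    (∃ y : EuclideanSpace ℝ (Fin 2), closedBall y (c * r) ⊆ S ∩ closedBall x r) ∧
    (∃ z : EuclideanSpace ℝ (Fin 2), closedBall z (c * r) ⊆ closedBall x r \ S)

lemma vol_cb (x : EuclideanSpace ℝ (Fin 2)) (s : ℝ) (hs : 0 ≤ s) :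
    volume (closedBall x s) = ENNReal.ofReal (Real.pi * s ^ 2) := by
  rw [EuclideanSpace.volume_closedBall]
  have h2 : (Fintype.card (Fin 2) : ℝ) = 2 := by simp
  rw [show (Fintype.card (Fin 2)) = 2 from by simp]
  rw [show ((2:ℕ):ℝ)/2 + 1 = 2 by norm_num, Real.Gamma_two, div_one,
    Real.sq_sqrt Real.pi_pos.le, ← ENNReal.ofReal_pow hs,
    ← ENNReal.ofReal_mul (by positivity), mul_comm]

lemma key (r₀ c : ℝ) (hr₀ : 0 < r₀) (hc : c ∈ Set.Ioc (0 : ℝ) 1)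
    (A B : Set (EuclideanSpace ℝ (Fin 2)))
    (hfB : (frontier B).Nonempty)
    (hcA : TwoSidedCorkscrew r₀ c A)
    (hvol : volume (symmDiff A B) < ENNReal.ofReal (Real.pi * c ^ 2 * r₀ ^ 2))
    (x : EuclideanSpace ℝ (Fin 2)) (hx : x ∈ frontier A) :
    infDist x (frontier B) ≤ (1 / c) * Real.sqrt ((volume (symmDiff A B)).toReal / Real.pi) := by
  set m := (volume (symmDiff A B)).toReal with hm
  have hmnn : 0 ≤ m := ENNReal.toReal_nonneg
  set D := (1 / c) * Real.sqrt (m / Real.pi) with hD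
  have hc0 : 0 < c := hc.1
  have hπ : 0 < Real.pi := Real.pi_pos
  have hDnn : 0 ≤ D := by positivity
  by_contra hcon
  push_neg at hcon
  set d := infDist x (frontier B) with hd
  -- m < π c² r₀²
  have hvolR : m < Real.pi * c ^ 2 * r₀ ^ 2 := by
    have := (ENNReal.toReal_lt_toReal (ne_top_of_lt hvol) ENNReal.ofReal_ne_top).mpr hvol
    rwa [ENNReal.toReal_ofReal (by positivity)] at this
  have hDr0 : D < r₀ := by
    rw [hD, div_mul_eq_mul_div, one_mul, div_lt_iff₀ hc0]
    have h1 : m / Real.pi < (r₀ * c) ^ 2 := by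
      rw [div_lt_iff₀ hπ]; ring_nf; ring_nf at hvolR; nlinarith
    calc Real.sqrt (m / Real.pi) < Real.sqrt ((r₀ * c) ^ 2) := by
          exact Real.sqrt_lt_sqrt (by positivity) h1
      _ = r₀ * c := Real.sqrt_sq (by positivity)
  set r := min ((D + d) / 2) r₀ with hr
  have hDd : D < d := hcon
  have hrpos : 0 < r := lt_min (by linarith) hr₀
  have hrr0 : r ≤ r₀ := min_le_right _ _
  have hDr : D < r := lt_min (by linarith) hDr0
  have hrd : r < d := lt_of_le_of_lt (min_le_left _ _) (by linarith)
  -- closedBall x r disjoint from frontier B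
  have hdisj : ∀ y ∈ closedBall x r, y ∉ frontier B := by
    intro y hy hyB
    have h1 : d ≤ dist x y := infDist_le_dist_of_mem hyB
    have : d ≤ r := le_trans (by rw [dist_comm] at h1; exact h1) (mem_closedBall.mp hy)
    linarith
  have hsub : closedBall x r ⊆ interior B ∪ (closure B)ᶜ := by
    intro y hy
    by_cases h1 : y ∈ interior B
    · exact Or.inl h1
    by_cases h2 : y ∈ closure B
    · exact absurd ⟨h2, h1⟩ (hdisj y hy)
    · exact Or.inr h2
  have hconn : IsPreconnected (closedBall x r) := (convex_closedBall x r).isPreconnected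
  have hcases := hconn.subset_or_subset isOpen_interior (isClosed_closure.isOpen_compl)
    (by
      rw [Set.disjoint_left]
      intro a ha hac
      exact hac (subset_closure (interior_subset ha))) hsub
  -- volume lower bound from a ball of radius c*r inside symmDiff
  have hball : ∀ w : EuclideanSpace ℝ (Fin 2), closedBall w (c * r) ⊆ symmDiff A B → False := by
    intro w hw
    have h1 : ENNReal.ofReal (Real.pi * (c * r) ^ 2) ≤ volume (symmDiff A B) := by
      rw [← vol_cb w (c * r) (by positivity)]
      exact measure_mono hw
    have h2 : Real.pi * (c * r) ^ 2 ≤ m := by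
      have := (ENNReal.toReal_le_toReal ENNReal.ofReal_ne_top (ne_top_of_lt hvol)).mpr h1
      rwa [ENNReal.toReal_ofReal (by positivity)] at this
    -- but r > D ⇒ π (c r)² > m
    have h3 : Real.sqrt (m / Real.pi) < c * r := by
      have := hDr
      rw [hD, div_mul_eq_mul_div, one_mul, div_lt_iff₀ hc0] at this
      linarith [this]
    have h4 : m / Real.pi < (c * r) ^ 2 := by
      have := Real.sq_sqrt (div_nonneg hmnn hπ.le)
      nlinarith [Real.sqrt_nonneg (m / Real.pi)]
    have : m < Real.pi * (c * r) ^ 2 := by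
      rw [div_lt_iff₀ hπ] at h4; linarith
    linarith
  rcases hcases with hB' | hB'
  · -- ball ⊆ B: use exterior corkscrew of A
    obtain ⟨-, z, hz⟩ := hcA x hx r hrpos hrr0
    refine hball z fun w hw => ?_
    have := hz hw
    have hwB : w ∈ B := interior_subset (hB' this.1)
    exact Or.inr ⟨hwB, this.2⟩
  · -- ball ⊆ Bᶜ: use interior corkscrew of A
    obtain ⟨⟨y, hy⟩, -⟩ := hcA x hx r hrpos hrr0
    refine hball y fun w hw => ?_
    have := hy hw
    have hwB : w ∉ B := fun h => hB' this.2 (subset_closure h)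
    exact Or.inl ⟨this.1, hwB⟩

/-- Hausdorff distance of boundaries of corkscrew sets is controlled by
the measure of the symmetric difference. -/
theorem stmt_1 (r₀ c : ℝ) (hr₀ : 0 < r₀) (hc : c ∈ Set.Ioc (0 : ℝ) 1)
    (A B : Set (EuclideanSpace ℝ (Fin 2)))
    (hA : IsCompact A) (hB : IsCompact B)
    (hfA : (frontier A).Nonempty) (hfB : (frontier B).Nonempty)
    (hcA : TwoSidedCorkscrew r₀ c A) (hcB : TwoSidedCorkscrew r₀ c B)
    (hvol : volume (symmDiff A B) < ENNReal.ofReal (Real.pi * c ^ 2 * r₀ ^ 2)) :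
    hausdorffDist (frontier A) (frontier B) ≤
      (1 / c) * Real.sqrt ((volume (symmDiff A B)).toReal / Real.pi) := by
  have hDnn : 0 ≤ (1 / c) * Real.sqrt ((volume (symmDiff A B)).toReal / Real.pi) := by
    have := hc.1; positivity
  refine hausdorffDist_le_of_infDist hDnn
    (fun x hx => key r₀ c hr₀ hc A B hfB hcA hvol x hx) (fun x hx => ?_)
  have h := key r₀ c hr₀ hc B A hfA hcB (by rwa [symmDiff_comm]) x hx
  rwa [symmDiff_comm B A] at h
end

section
/- Let β₀ ∈ (0, π/2], let P ∈ ℝ², and let v₁, v₂ be unit vectors in ℝ² with |⟨v₁, v₂⟩| ≤ cos β₀. Let ℓᵢ = {P + s·vᵢ : s ∈ ℝ} for i = 1, 2 be the two lines through P with directions v₁ and v₂. If Q ∈ ℝ² and δ ≥ 0 satisfy dist(Q, ℓ₁) ≤ δ and dist(Q, ℓ₂) ≤ δ, then ‖Q − P‖ ≤ 2δ / sin β₀. -/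
/-!
Write `w = Q - P`, `c = ⟪v₁, v₂⟫` and `aᵢ = ⟪w, vᵢ⟫`. The orthogonal projection of `w` on the
direction `vᵢ` is `aᵢ • vᵢ`, so `‖w‖² - aᵢ² ≤ δ²`, and by the triangle inequality through `w` the
two projections satisfy `‖a₁ • v₁ - a₂ • v₂‖ ≤ 2δ`, i.e. `a₁² + a₂² - 2 a₁ a₂ c ≤ 4δ²`.
Since `a₁² + a₂² - 2 a₁ a₂ c ≥ (a₁² + a₂²)(1 - |c|)`, eliminating the `aᵢ` gives
`‖w‖² (1 - c²) ≤ 4δ²`, and `sin² β₀ ≤ 1 - c²`.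
The argument works in any real inner product space.
-/

open scoped RealInnerProductSpace

section Projection

variable {E : Type*} [NormedAddCommGroup E] [InnerProductSpace ℝ E]

lemma norm_sub_inner_smul_sq {u v : E} (hv : ‖v‖ = 1) :
    ‖u - ⟪u, v⟫ • v‖ ^ 2 = ‖u‖ ^ 2 - ⟪u, v⟫ ^ 2 := by
  rw [norm_sub_sq_real, inner_smul_right, norm_smul, hv, mul_one, Real.norm_eq_abs, sq_abs]
  ring

lemma norm_sub_inner_smul_le_norm_sub_smul {u v : E} (hv : ‖v‖ = 1) (s : ℝ) :
    ‖u - ⟪u, v⟫ • v‖ ≤ ‖u - s • v‖ := by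
  have hs : ‖u - s • v‖ ^ 2 = ‖u‖ ^ 2 - 2 * s * ⟪u, v⟫ + s ^ 2 := by
    rw [norm_sub_sq_real, inner_smul_right, norm_smul, hv, mul_one, Real.norm_eq_abs, sq_abs]
    ring
  rw [← sq_le_sq₀ (norm_nonneg _) (norm_nonneg _), hs, norm_sub_inner_smul_sq hv]
  nlinarith [sq_nonneg (s - ⟪u, v⟫)]

lemma norm_sub_inner_smul_le_infDist (P Q : E) {v : E} (hv : ‖v‖ = 1) :
    ‖(Q - P) - ⟪Q - P, v⟫ • v‖ ≤ Metric.infDist Q {x | ∃ s : ℝ, x = P + s • v} := by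
  refine (Metric.le_infDist ?_).2 fun y ⟨s, hy⟩ => ?_
  · exact ⟨P, 0, by simp⟩
  rw [hy, dist_eq_norm, sub_add_eq_sub_sub]
  exact norm_sub_inner_smul_le_norm_sub_smul hv s

lemma mul_one_sub_sq_le_of_near_two_lines {n a b c C δ : ℝ} (hn : 0 ≤ n)
    (ha : n ≤ a ^ 2 + δ ^ 2) (hb : n ≤ b ^ 2 + δ ^ 2)
    (hab : a ^ 2 + b ^ 2 - 2 * a * b * c ≤ 4 * δ ^ 2) (hc : |c| ≤ 1) (hcC : |c| ≤ C) :
    n * (1 - C ^ 2) ≤ 4 * δ ^ 2 := by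
  have hcross : (a ^ 2 + b ^ 2) * (1 - |c|) ≤ a ^ 2 + b ^ 2 - 2 * a * b * c := by
    have : 2 * a * b * c ≤ 2 * |a| * |b| * |c| := by
      simpa only [abs_mul, abs_two] using le_abs_self (2 * a * b * c)
    nlinarith [sq_nonneg (|a| - |b|), abs_nonneg c, sq_abs a, sq_abs b]
  have hlin : n * (1 - |c|) ≤ δ ^ 2 * (3 - |c|) := by
    nlinarith [mul_le_mul_of_nonneg_right (add_le_add ha hb) (sub_nonneg.2 hc)]
  have hquad : n * (1 - c ^ 2) ≤ 4 * δ ^ 2 := by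
    nlinarith [mul_le_mul_of_nonneg_right hlin (by positivity : (0 : ℝ) ≤ 1 + |c|),
      sq_abs c, sq_nonneg (1 - |c|), sq_nonneg δ]
  nlinarith [mul_le_mul_of_nonneg_left (sq_le_sq' (neg_le_of_abs_le hcC) (le_of_abs_le hcC)) hn]

theorem sq_norm_mul_one_sub_sq_le {u v₁ v₂ : E} {C δ : ℝ} (hv₁ : ‖v₁‖ = 1) (hv₂ : ‖v₂‖ = 1)
    (hangle : |⟪v₁, v₂⟫| ≤ C)
    (h₁ : ‖u - ⟪u, v₁⟫ • v₁‖ ≤ δ) (h₂ : ‖u - ⟪u, v₂⟫ • v₂‖ ≤ δ) :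
    ‖u‖ ^ 2 * (1 - C ^ 2) ≤ 4 * δ ^ 2 := by
  have hsq₁ : ‖u‖ ^ 2 ≤ ⟪u, v₁⟫ ^ 2 + δ ^ 2 := by
    nlinarith [norm_sub_inner_smul_sq (u := u) hv₁, pow_le_pow_left₀ (norm_nonneg _) h₁ 2]
  have hsq₂ : ‖u‖ ^ 2 ≤ ⟪u, v₂⟫ ^ 2 + δ ^ 2 := by
    nlinarith [norm_sub_inner_smul_sq (u := u) hv₂, pow_le_pow_left₀ (norm_nonneg _) h₂ 2]
  have hproj : ‖⟪u, v₁⟫ • v₁ - ⟪u, v₂⟫ • v₂‖ ≤ 2 * δ := by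
    calc ‖⟪u, v₁⟫ • v₁ - ⟪u, v₂⟫ • v₂‖
        = ‖(u - ⟪u, v₂⟫ • v₂) - (u - ⟪u, v₁⟫ • v₁)‖ := by congr 1; abel
      _ ≤ ‖u - ⟪u, v₂⟫ • v₂‖ + ‖u - ⟪u, v₁⟫ • v₁‖ := norm_sub_le _ _
      _ ≤ 2 * δ := by linarith
  have hproj_sq : ‖⟪u, v₁⟫ • v₁ - ⟪u, v₂⟫ • v₂‖ ^ 2
      = ⟪u, v₁⟫ ^ 2 + ⟪u, v₂⟫ ^ 2 - 2 * ⟪u, v₁⟫ * ⟪u, v₂⟫ * ⟪v₁, v₂⟫ := by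
    rw [norm_sub_sq_real, norm_smul, norm_smul, hv₁, hv₂, inner_smul_left, inner_smul_right,
      Real.norm_eq_abs, Real.norm_eq_abs, mul_one, mul_one, sq_abs, sq_abs]
    simp only [conj_trivial]
    ring
  have hc : |⟪v₁, v₂⟫| ≤ 1 := by simpa [hv₁, hv₂] using abs_real_inner_le_norm v₁ v₂
  refine mul_one_sub_sq_le_of_near_two_lines (by positivity) hsq₁ hsq₂ ?_ hc hangle
  rw [← hproj_sq]
  nlinarith [pow_le_pow_left₀ (norm_nonneg _) hproj 2]

end Projection

theorem stmt_2_general (β₀ : ℝ) (hβ₀ : β₀ ∈ Set.Ioc (0 : ℝ) (Real.pi / 2))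
    (P v₁ v₂ Q : EuclideanSpace ℝ (Fin 2))
    (hv₁ : ‖v₁‖ = 1) (hv₂ : ‖v₂‖ = 1)
    (hangle : |⟪v₁, v₂⟫| ≤ Real.cos β₀)
    (δ : ℝ)
    (h1 : Metric.infDist Q {x | ∃ s : ℝ, x = P + s • v₁} ≤ δ)
    (h2 : Metric.infDist Q {x | ∃ s : ℝ, x = P + s • v₂} ≤ δ) :
    ‖Q - P‖ ≤ 2 * δ / Real.sin β₀ := by
  have hsin : 0 < Real.sin β₀ :=
    Real.sin_pos_of_pos_of_lt_pi hβ₀.1 (hβ₀.2.trans_lt (by linarith [Real.pi_pos]))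
  have hδ : 0 ≤ δ := Metric.infDist_nonneg.trans h1
  have key := sq_norm_mul_one_sub_sq_le hv₁ hv₂ hangle
    ((norm_sub_inner_smul_le_infDist P Q hv₁).trans h1)
    ((norm_sub_inner_smul_le_infDist P Q hv₂).trans h2)
  rw [← Real.sin_sq, ← mul_pow, show 4 * δ ^ 2 = (2 * δ) ^ 2 by ring,
    sq_le_sq₀ (by positivity) (by positivity)] at key
  rwa [le_div_iff₀ hsin]

/-- quantitative stability of the intersection point of two lines
meeting at an angle with sine at least `sin β₀`. -/
theorem stmt_2 (β₀ : ℝ) (hβ₀ : β₀ ∈ Set.Ioc (0 : ℝ) (Real.pi / 2))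
    (P v₁ v₂ Q : EuclideanSpace ℝ (Fin 2))
    (hv₁ : ‖v₁‖ = 1) (hv₂ : ‖v₂‖ = 1)
    (hangle : |⟪v₁, v₂⟫| ≤ Real.cos β₀)
    (δ : ℝ) (hδ : 0 ≤ δ)
    (h1 : Metric.infDist Q {x | ∃ s : ℝ, x = P + s • v₁} ≤ δ)
    (h2 : Metric.infDist Q {x | ∃ s : ℝ, x = P + s • v₂} ≤ δ) :
    ‖Q - P‖ ≤ 2 * δ / Real.sin β₀ :=
  stmt_2_general β₀ hβ₀ P v₁ v₂ Q hv₁ hv₂ hangle δ h1 h2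
end

section
/- Let Ω ⊆ ℝ² be open, let u, v : Ω → ℝ be twice continuously differentiable and harmonic on Ω (Δu = Δv = 0), and let U : Ω → ℝ² be continuously differentiable. Define the vector field b = ⟨U, ∇u⟩ ∇v + ⟨U, ∇v⟩ ∇u − ⟨∇u, ∇v⟩ U on Ω. Then at every point of Ω, div b = ⟨(DU + DUᵀ) ∇u, ∇v⟩ − (div U) ⟨∇u, ∇v⟩, where DU is the Jacobian matrix of U. Equivalently, with 𝒜 = (div U)·I − (DU + DUᵀ), one has ⟨𝒜 ∇u, ∇v⟩ = −div b. -/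
open scoped RealInnerProductSpace
open Gradient

/-!
The product rule `div (g • F) = g * div F + ⟪∇ g, F⟫` expands `div b` into terms involving `Δ u`,
`Δ v`, `div U`, `DU` and the Hessians `D∇u`, `D∇v`. Harmonicity kills the Laplacian terms, and the
four Hessian terms cancel in pairs because the Hessian of a `C²` function is symmetric.
-/

section

variable {E : Type*} [NormedAddCommGroup E] [InnerProductSpace ℝ E]

noncomputable def divergence (F : E → E) (x : E) : ℝ :=
  LinearMap.trace ℝ E (fderiv ℝ F x)

lemma divergence_eq_sum_inner {ι : Type*} [Fintype ι] (b : OrthonormalBasis ι ℝ E)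
    (F : E → E) (x : E) : divergence F x = ∑ i, ⟪fderiv ℝ F x (b i), b i⟫ := by
  simp only [divergence, LinearMap.trace_eq_sum_inner _ b, real_inner_comm]
  rfl

lemma divergence_add {F G : E → E} {x : E} (hF : DifferentiableAt ℝ F x)
    (hG : DifferentiableAt ℝ G x) :
    divergence (fun y => F y + G y) x = divergence F x + divergence G x := by
  simp [divergence, fderiv_fun_add hF hG]

lemma divergence_sub {F G : E → E} {x : E} (hF : DifferentiableAt ℝ F x)
    (hG : DifferentiableAt ℝ G x) :
    divergence (fun y => F y - G y) x = divergence F x - divergence G x := by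
  simp [divergence, fderiv_fun_sub hF hG]

lemma divergence_smul [FiniteDimensional ℝ E] {g : E → ℝ} {F : E → E} {x : E}
    (hg : DifferentiableAt ℝ g x) (hF : DifferentiableAt ℝ F x) :
    divergence (fun y => g y • F y) x = g x * divergence F x + fderiv ℝ g x (F x) := by
  simp [divergence, fderiv_fun_smul hg hF]

lemma ContDiffAt.differentiableAt_fderiv {f : E → ℝ} {x : E} (hf : ContDiffAt ℝ 2 f x) :
    DifferentiableAt ℝ (fderiv ℝ f) x :=
  (hf.fderiv_right (m := 1) le_rfl).differentiableAt one_ne_zero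

lemma fderiv_fderiv_apply {f : E → ℝ} {x : E} (hf : DifferentiableAt ℝ (fderiv ℝ f) x)
    (w z : E) : fderiv ℝ (fun y => fderiv ℝ f y z) x w = fderiv ℝ (fderiv ℝ f) x w z := by
  simp [fderiv_clm_apply hf (differentiableAt_const z)]

variable [CompleteSpace E]

lemma differentiableAt_gradient {f : E → ℝ} {x : E} (hf : DifferentiableAt ℝ (fderiv ℝ f) x) :
    DifferentiableAt ℝ (∇ f) x := by
  -- `toDual` is only conjugate-linear; over `ℝ` Mazur–Ulam repackages it as a linear isometry.
  have h : ∇ f =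
      (InnerProductSpace.toDual ℝ E).symm.toIsometryEquiv.toRealLinearIsometryEquiv ∘ fderiv ℝ f := by
    ext1 y
    simp [gradient]
  exact h ▸ (LinearIsometryEquiv.differentiableAt _).comp x hf

lemma inner_fderiv_gradient {f : E → ℝ} {x : E} (hf : DifferentiableAt ℝ (fderiv ℝ f) x)
    (w z : E) : ⟪fderiv ℝ (∇ f) x w, z⟫ = fderiv ℝ (fderiv ℝ f) x w z := by
  have h := fderiv_inner_apply ℝ (differentiableAt_gradient hf) (differentiableAt_const z) w
  simp only [inner_gradient_left, fderiv_fderiv_apply hf, fderiv_const_apply] at h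
  simpa using h.symm

lemma inner_fderiv_gradient_comm {f : E → ℝ} {x : E} (hf : ContDiffAt ℝ 2 f x) (w z : E) :
    ⟪fderiv ℝ (∇ f) x w, z⟫ = ⟪w, fderiv ℝ (∇ f) x z⟫ := by
  rw [inner_fderiv_gradient hf.differentiableAt_fderiv, real_inner_comm,
    inner_fderiv_gradient hf.differentiableAt_fderiv]
  exact hf.isSymmSndFDerivAt (by simp) w z

lemma divergence_gradient_eq_sum {ι : Type*} [Fintype ι] (b : OrthonormalBasis ι ℝ E)
    {f : E → ℝ} {x : E} (hf : DifferentiableAt ℝ (fderiv ℝ f) x) :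
    divergence (∇ f) x = ∑ i, fderiv ℝ (fun y => fderiv ℝ f y (b i)) x (b i) := by
  simp only [divergence_eq_sum_inner b, inner_fderiv_gradient hf, fderiv_fderiv_apply hf]

theorem divergence_inner_smul_gradient_eq [FiniteDimensional ℝ E] {u v : E → ℝ} {U : E → E}
    {x : E} (hu : ContDiffAt ℝ 2 u x) (hv : ContDiffAt ℝ 2 v x) (hU : DifferentiableAt ℝ U x)
    (hΔu : divergence (∇ u) x = 0) (hΔv : divergence (∇ v) x = 0) :
    divergence (fun y => ⟪U y, ∇ u y⟫ • ∇ v y + ⟪U y, ∇ v y⟫ • ∇ u y - ⟪∇ u y, ∇ v y⟫ • U y) x =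
      ⟪fderiv ℝ U x (∇ u x), ∇ v x⟫ + ⟪∇ u x, fderiv ℝ U x (∇ v x)⟫ -
        divergence U x * ⟪∇ u x, ∇ v x⟫ := by
  have du := differentiableAt_gradient hu.differentiableAt_fderiv
  have dv := differentiableAt_gradient hv.differentiableAt_fderiv
  have d₁ := (hU.inner ℝ du).fun_smul dv
  have d₂ := (hU.inner ℝ dv).fun_smul du
  have d₃ := (du.inner ℝ dv).fun_smul hU
  rw [divergence_sub (d₁.fun_add d₂) d₃, divergence_add d₁ d₂,
    divergence_smul (hU.inner ℝ du) dv, divergence_smul (hU.inner ℝ dv) du,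
    divergence_smul (du.inner ℝ dv) hU, fderiv_inner_apply ℝ hU du, fderiv_inner_apply ℝ hU dv,
    fderiv_inner_apply ℝ du dv, hΔu, hΔv]
  have hsu := inner_fderiv_gradient_comm hu (U x) (∇ v x)
  have hsv := inner_fderiv_gradient_comm hv (U x) (∇ u x)
  linarith [real_inner_comm (∇ u x) (fderiv ℝ U x (∇ v x)),
    real_inner_comm (∇ u x) (fderiv ℝ (∇ v) x (U x))]

end

/-- divergence identity for
`b = ⟨U,∇u⟩∇v + ⟨U,∇v⟩∇u − ⟨∇u,∇v⟩U` when `u, v` are harmonic: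
`div b = ⟨(DU + DUᵀ)∇u, ∇v⟩ − (div U)⟨∇u, ∇v⟩`, i.e. `⟨𝒜∇u, ∇v⟩ = −div b`. -/
theorem stmt_11 (Ω : Set (EuclideanSpace ℝ (Fin 2))) (hΩ : IsOpen Ω)
    (u v : EuclideanSpace ℝ (Fin 2) → ℝ)
    (U : EuclideanSpace ℝ (Fin 2) → EuclideanSpace ℝ (Fin 2))
    (hu : ContDiffOn ℝ 2 u Ω) (hv : ContDiffOn ℝ 2 v Ω)
    (hU : ContDiffOn ℝ 1 U Ω)
    (hharmu : ∀ x ∈ Ω, ∑ i : Fin 2,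
      fderiv ℝ (fun y => fderiv ℝ u y (EuclideanSpace.single i (1 : ℝ))) x
        (EuclideanSpace.single i (1 : ℝ)) = 0)
    (hharmv : ∀ x ∈ Ω, ∑ i : Fin 2,
      fderiv ℝ (fun y => fderiv ℝ v y (EuclideanSpace.single i (1 : ℝ))) x
        (EuclideanSpace.single i (1 : ℝ)) = 0)
    (b : EuclideanSpace ℝ (Fin 2) → EuclideanSpace ℝ (Fin 2))
    (hb : b = fun y => ⟪U y, ∇ u y⟫ • ∇ v y + ⟪U y, ∇ v y⟫ • ∇ u y - ⟪∇ u y, ∇ v y⟫ • U y)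
    (divb divU : EuclideanSpace ℝ (Fin 2) → ℝ)
    (hdivb : divb = fun x => ∑ i : Fin 2,
      ⟪fderiv ℝ b x (EuclideanSpace.single i (1 : ℝ)), EuclideanSpace.single i (1 : ℝ)⟫)
    (hdivU : divU = fun x => ∑ i : Fin 2,
      ⟪fderiv ℝ U x (EuclideanSpace.single i (1 : ℝ)), EuclideanSpace.single i (1 : ℝ)⟫) :
    ∀ x ∈ Ω,
      divb x = (⟪fderiv ℝ U x (∇ u x), ∇ v x⟫ + ⟪∇ u x, fderiv ℝ U x (∇ v x)⟫) -
          divU x * ⟪∇ u x, ∇ v x⟫ ∧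
      divU x * ⟪∇ u x, ∇ v x⟫ -
          (⟪fderiv ℝ U x (∇ u x), ∇ v x⟫ + ⟪∇ u x, fderiv ℝ U x (∇ v x)⟫) = -divb x := by
  intro x hx
  have hxΩ : Ω ∈ nhds x := hΩ.mem_nhds hx
  have huAt := hu.contDiffAt hxΩ
  have hvAt := hv.contDiffAt hxΩ
  have hcoord := divergence_eq_sum_inner (EuclideanSpace.basisFun (Fin 2) ℝ)
  simp only [EuclideanSpace.basisFun_apply] at hcoord
  have hΔu : divergence (∇ u) x = 0 := by
    rw [divergence_gradient_eq_sum (EuclideanSpace.basisFun _ ℝ) huAt.differentiableAt_fderiv]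
    simpa only [EuclideanSpace.basisFun_apply] using hharmu x hx
  have hΔv : divergence (∇ v) x = 0 := by
    rw [divergence_gradient_eq_sum (EuclideanSpace.basisFun _ ℝ) hvAt.differentiableAt_fderiv]
    simpa only [EuclideanSpace.basisFun_apply] using hharmv x hx
  have hdiv : divb x = (⟪fderiv ℝ U x (∇ u x), ∇ v x⟫ + ⟪∇ u x, fderiv ℝ U x (∇ v x)⟫) -
      divU x * ⟪∇ u x, ∇ v x⟫ := by
    rw [hdivb, hdivU, hb]
    beta_reduce
    rw [← hcoord, ← hcoord]
    exact divergence_inner_smul_gradient_eq huAt hvAt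
      ((hU.contDiffAt hxΩ).differentiableAt one_ne_zero) hΔu hΔv
  exact ⟨hdiv, by rw [hdiv]; ring⟩
end

section
/- Let n, τ be orthonormal vectors in ℝ², let γ₊, γ₋ > 0, and let U, w⁺, w⁻, z⁺, z⁻ ∈ ℝ² satisfy: ⟨U, n⟩ = 0 (the field is tangential to the interface); ⟨w⁺, τ⟩ = ⟨w⁻, τ⟩ and γ₊⟨w⁺, n⟩ = γ₋⟨w⁻, n⟩ (transmission conditions for the first gradient); ⟨z⁺, τ⟩ = ⟨z⁻, τ⟩ and γ₊⟨z⁺, n⟩ = γ₋⟨z⁻, n⟩ (transmission conditions for the second gradient). Define b(w, z) = ⟨U, w⟩ z + ⟨U, z⟩ w − ⟨w, z⟩ U. Then γ₊ ⟨b(w⁺, z⁺), n⟩ = γ₋ ⟨b(w⁻, z⁻), n⟩; that is, the jump [γ b · n] across the interface vanishes. -/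
open scoped RealInnerProductSpace

/-! In the plane, a field tangential to the interface is a multiple `c • τ` of the tangent.
Then `⟪b(w, z), n⟫ = c (⟪w, τ⟫ ⟪z, n⟫ + ⟪z, τ⟫ ⟪w, n⟫)`: each term pairs a tangential component,
continuous across `Σ`, with a normal component, whose `γ`-weighted value is continuous across `Σ`.
So after multiplying by `γ±` both sides agree. -/

open Module Submodule

section

variable {E : Type*} [NormedAddCommGroup E] [InnerProductSpace ℝ E]

theorem mem_span_singleton_of_inner_eq_zero_of_finrank_eq_two [FiniteDimensional ℝ E]
    (hE : finrank ℝ E = 2) {n τ U : E} (hn : n ≠ 0) (hτ : τ ≠ 0)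
    (hnτ : ⟪n, τ⟫ = 0) (hU : ⟪U, n⟫ = 0) : U ∈ ℝ ∙ τ := by
  have : Fact (finrank ℝ E = 1 + 1) := ⟨hE⟩
  have hspan : ℝ ∙ τ = (ℝ ∙ n)ᗮ :=
    eq_of_le_of_finrank_eq
      ((span_singleton_le_iff_mem _ _).2 (mem_orthogonal_singleton_iff_inner_right.2 hnτ))
      (by rw [finrank_span_singleton hτ, finrank_orthogonal_span_singleton (n := 1) hn])
  rw [hspan]
  exact mem_orthogonal_singleton_iff_inner_left.2 hU

theorem inner_flux_eq_of_eq_smul {U τ n : E} {c : ℝ} (hU : U = c • τ) (hτn : ⟪τ, n⟫ = 0)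
    (w z : E) :
    ⟪⟪U, w⟫ • z + ⟪U, z⟫ • w - ⟪w, z⟫ • U, n⟫ = c * (⟪w, τ⟫ * ⟪z, n⟫ + ⟪z, τ⟫ * ⟪w, n⟫) := by
  subst hU
  simp only [inner_add_left, inner_sub_left, real_inner_smul_left, hτn, real_inner_comm τ]
  ring

end

theorem stmt_12_general (n τ : EuclideanSpace ℝ (Fin 2))
    (hτ : ‖τ‖ = 1) (hnτ : ⟪n, τ⟫ = 0)
    (γp γm : ℝ)
    (U wp wm zp zm : EuclideanSpace ℝ (Fin 2))
    (hU : ⟪U, n⟫ = 0)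
    (hwτ : ⟪wp, τ⟫ = ⟪wm, τ⟫) (hwn : γp * ⟪wp, n⟫ = γm * ⟪wm, n⟫)
    (hzτ : ⟪zp, τ⟫ = ⟪zm, τ⟫) (hzn : γp * ⟪zp, n⟫ = γm * ⟪zm, n⟫)
    (b : EuclideanSpace ℝ (Fin 2) → EuclideanSpace ℝ (Fin 2) → EuclideanSpace ℝ (Fin 2))
    (hb : b = fun w z => ⟪U, w⟫ • z + ⟪U, z⟫ • w - ⟪w, z⟫ • U) :
    γp * ⟪b wp zp, n⟫ = γm * ⟪b wm zm, n⟫ := by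
  subst hb
  obtain rfl | hn := eq_or_ne n 0
  · simp
  have hτ0 : τ ≠ 0 := norm_ne_zero_iff.1 (by rw [hτ]; exact one_ne_zero)
  obtain ⟨c, hc⟩ := mem_span_singleton.1 <|
    mem_span_singleton_of_inner_eq_zero_of_finrank_eq_two finrank_euclideanSpace_fin hn hτ0 hnτ hU
  have hτn : ⟪τ, n⟫ = 0 := by rw [real_inner_comm, hnτ]
  simp only [inner_flux_eq_of_eq_smul hc.symm hτn, hwτ, hzτ]
  linear_combination c * ⟪wm, τ⟫ * hzn + c * ⟪zm, τ⟫ * hwn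

/-- the jump `[γ b · n]` across a flat interface vanishes when the
field `U` is tangential and the traces satisfy the transmission conditions. -/
theorem stmt_12 (n τ : EuclideanSpace ℝ (Fin 2))
    (hn : ‖n‖ = 1) (hτ : ‖τ‖ = 1) (hnτ : ⟪n, τ⟫ = 0)
    (γp γm : ℝ) (hγp : 0 < γp) (hγm : 0 < γm)
    (U wp wm zp zm : EuclideanSpace ℝ (Fin 2))
    (hU : ⟪U, n⟫ = 0)
    (hwτ : ⟪wp, τ⟫ = ⟪wm, τ⟫) (hwn : γp * ⟪wp, n⟫ = γm * ⟪wm, n⟫)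
    (hzτ : ⟪zp, τ⟫ = ⟪zm, τ⟫) (hzn : γp * ⟪zp, n⟫ = γm * ⟪zm, n⟫)
    (b : EuclideanSpace ℝ (Fin 2) → EuclideanSpace ℝ (Fin 2) → EuclideanSpace ℝ (Fin 2))
    (hb : b = fun w z => ⟪U, w⟫ • z + ⟪U, z⟫ • w - ⟪w, z⟫ • U) :
    γp * ⟪b wp zp, n⟫ = γm * ⟪b wm zm, n⟫ :=
  stmt_12_general n τ hτ hnτ γp γm U wp wm zp zm hU hwτ hwn hzτ hzn b hb
end

section
/- Let n, τ be orthonormal vectors in ℝ², let γ > 0 and k > 0, and let U, w⁺, wⁱ, z⁺, zⁱ ∈ ℝ² satisfy the transmission conditions ⟨w⁺, τ⟩ = ⟨wⁱ, τ⟩, γ⟨w⁺, n⟩ = k⟨wⁱ, n⟩, ⟨z⁺, τ⟩ = ⟨zⁱ, τ⟩ and γ⟨z⁺, n⟩ = k⟨zⁱ, n⟩. Define b(w, z) = ⟨U, w⟩ z + ⟨U, z⟩ w − ⟨w, z⟩ U. Then γ ⟨b(w⁺, z⁺), n⟩ − k ⟨b(wⁱ, zⁱ), n⟩ = ⟨U,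 n⟩ (k − γ) [ (k/γ) ⟨wⁱ, n⟩ ⟨zⁱ, n⟩ + ⟨wⁱ, τ⟩ ⟨zⁱ, τ⟩ ]; that is, the jump of γ b · n across the inclusion boundary equals (U·n)(k − γ) ⟨ℳ wⁱ, zⁱ⟩ where ℳ is the symmetric tensor with eigenvector n of eigenvalue k/γ and eigenvector τ of eigenvalue 1. -/
open scoped RealInnerProductSpace

lemma inner_expand_aux (n τ : EuclideanSpace ℝ (Fin 2))
    (hn : ‖n‖ = 1) (hτ : ‖τ‖ = 1) (hnτ : ⟪n, τ⟫ = 0) (x y : EuclideanSpace ℝ (Fin 2)) :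
    ⟪x, y⟫ = ⟪x, n⟫ * ⟪y, n⟫ + ⟪x, τ⟫ * ⟪y, τ⟫ := by
  have hnn : ⟪n, n⟫ = 1 := by rw [real_inner_self_eq_norm_sq, hn]; norm_num
  have hττ : ⟪τ, τ⟫ = 1 := by rw [real_inner_self_eq_norm_sq, hτ]; norm_num
  have hτn : ⟪τ, n⟫ = 0 := by rw [real_inner_comm]; exact hnτ
  have horth : Orthonormal ℝ ![n, τ] := by
    rw [orthonormal_iff_ite]
    intro i j
    fin_cases i <;> fin_cases j <;> simp_all
  have hcard : Fintype.card (Fin 2) = Module.finrank ℝ (EuclideanSpace ℝ (Fin 2)) := by simp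
  let B : OrthonormalBasis (Fin 2) ℝ (EuclideanSpace ℝ (Fin 2)) :=
    OrthonormalBasis.mk horth (by
      rw [(horth.linearIndependent.span_eq_top_of_card_eq_finrank hcard : _)])
  have h := B.sum_inner_mul_inner x y
  simp only [Fin.sum_univ_two, B, OrthonormalBasis.coe_mk, Matrix.cons_val_zero,
    Matrix.cons_val_one, Matrix.head_cons] at h
  rw [real_inner_comm n y, real_inner_comm τ y]
  linarith [h]

/-- the jump of `γ b · n` across the inclusion boundary equals
`(U·n)(k − γ)⟨ℳ wⁱ, zⁱ⟩` with `ℳ = (k/γ) n⊗n + τ⊗τ`. -/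
theorem stmt_13 (n τ : EuclideanSpace ℝ (Fin 2))
    (hn : ‖n‖ = 1) (hτ : ‖τ‖ = 1) (hnτ : ⟪n, τ⟫ = 0)
    (γ k : ℝ) (hγ : 0 < γ) (hk : 0 < k)
    (U wp wi zp zi : EuclideanSpace ℝ (Fin 2))
    (hwτ : ⟪wp, τ⟫ = ⟪wi, τ⟫) (hwn : γ * ⟪wp, n⟫ = k * ⟪wi, n⟫)
    (hzτ : ⟪zp, τ⟫ = ⟪zi, τ⟫) (hzn : γ * ⟪zp, n⟫ = k * ⟪zi, n⟫)
    (b : EuclideanSpace ℝ (Fin 2) → EuclideanSpace ℝ (Fin 2) → EuclideanSpace ℝ (Fin 2))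
    (hb : b = fun w z => ⟪U, w⟫ • z + ⟪U, z⟫ • w - ⟪w, z⟫ • U) :
    γ * ⟪b wp zp, n⟫ - k * ⟪b wi zi, n⟫ =
      ⟪U, n⟫ * (k - γ) * ((k / γ) * (⟪wi, n⟫ * ⟪zi, n⟫) + ⟪wi, τ⟫ * ⟪zi, τ⟫) := by
  have key := inner_expand_aux n τ hn hτ hnτ
  have e : ∀ w z : EuclideanSpace ℝ (Fin 2),
      ⟪b w z, n⟫ = ⟪U, w⟫ * ⟪z, n⟫ + ⟪U, z⟫ * ⟪w, n⟫ - ⟪w, z⟫ * ⟪U, n⟫ := by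
    intro w z
    simp [hb, inner_add_left, inner_sub_left, real_inner_smul_left]
  rw [e, e, key U wp, key U zp, key U wi, key U zi, key wp zp, key wi zi,
    hwτ, hzτ]
  have hwn' : ⟪wp, n⟫ = k * ⟪wi, n⟫ / γ := by rw [eq_div_iff (ne_of_gt hγ)]; linarith
  have hzn' : ⟪zp, n⟫ = k * ⟪zi, n⟫ / γ := by rw [eq_div_iff (ne_of_gt hγ)]; linarith
  rw [hwn', hzn']
  field_simp
  ring
end
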